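/- Let (G, F) be an inverse sequence of twinned graph homomorphisms, with inverse limit vertex set V_G and relations E_G, E_F. For x ∈ V_G and j ∈ ℕ define the cylinder C(v, j) = {y ∈ V_G : y_j = v}, the set C̄(x, j) = ∪{C(v, j) : (v, x_j) ∈ E(F_j)}, and for A ⊆ V_G, C̄(A, j) = ∪_{a∈A} C̄(a, j); inductively C̄(x, j, j) = C̄(x, j) and C̄(x, j, i) = C̄(C̄(x, j, i−1), i) for i > j; finally C̃(x, j) = ∪_{i≥j} C̄(x, j, i). Then C̃(x, j) is E_F-saturated: if x' ∈ C̃(x, j) and (x', y) ∈ E_F, then y ∈ C̃(x, j). -/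
import Mathlib


/-- An inverse sequence of twinned graph homomorphisms `(𝒢, ℱ)`: graphs
`G_i = (V i, EG i)` and `F_i = (V i, EF i)` on the same finite vertex sets, sharing
connecting maps `φ i : V (i+1) → V i`, satisfying conditions (DS0)–(DS3b). -/
structure TwinnedSeq : Type 1 where
  V : ℕ → Type
  fintype : ∀ i, Fintype (V i)
  EG : ∀ i, V i → V i → Prop
  EF : ∀ i, V i → V i → Prop
  φ : ∀ i, V (i + 1) → V i
  /-- (DS0) `G_0` has exactly one vertex. -/
  ds0_nonempty : Nonempty (V 0)
  ds0_subsingleton : ∀ v w : V 0, v = w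
  /-- (DS1) each `φ i` is an edge-surjective graph homomorphism for `𝒢`, and every
  vertex of every `G_i` has an outgoing edge. -/
  ds1_hom : ∀ i, ∀ u v : V (i + 1), EG (i + 1) u v → EG i (φ i u) (φ i v)
  ds1_edge_surj : ∀ i, ∀ u v : V i, EG i u v →
    ∃ a b : V (i + 1), EG (i + 1) a b ∧ φ i a = u ∧ φ i b = v
  ds1_out : ∀ i, ∀ v : V i, ∃ w, EG i v w
  /-- (DS2) each `φ i` is a graph homomorphism for `ℱ`, each `EF i` is symmetric and
  reflexive. -/
  ds2_hom : ∀ i, ∀ u v : V (i + 1), EF (i + 1) u v → EF i (φ i u) (φ i v)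
  ds2_symm : ∀ i, ∀ u v : V i, EF i u v → EF i v u
  ds2_refl : ∀ i, ∀ v : V i, EF i v v
  /-- (DS3) -/
  ds3 : ∀ i, ∀ a b a' b' : V (i + 1),
    EF (i + 1) a b → EG (i + 1) a a' → EG (i + 1) b b' → EF i (φ i a') (φ i b')
  /-- (DS3b) -/
  ds3b : ∀ i, ∀ a b c : V (i + 1), EF (i + 1) a b → EF (i + 1) b c → EF i (φ i a) (φ i c)

/-- The inverse limit vertex set `V_G`. -/
def TwLimit (S : TwinnedSeq) : Type :=
  {x : ∀ i, S.V i // ∀ i, x i = S.φ i (x (i + 1))}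

/-- `V_G` as a subspace of the product of the discrete (finite) spaces `V i`. -/
instance (S : TwinnedSeq) : TopologicalSpace (TwLimit S) :=
  letI : ∀ i, TopologicalSpace (S.V i) := fun _ => ⊥
  inferInstanceAs (TopologicalSpace {x : ∀ i, S.V i // ∀ i, x i = S.φ i (x (i + 1))})

/-- The inverse limit relation `E_G`. -/
def limEG (S : TwinnedSeq) (x y : TwLimit S) : Prop :=
  ∀ i, S.EG i (x.1 i) (y.1 i)

/-- The inverse limit relation `E_F`. -/
def limEF (S : TwinnedSeq) (x y : TwLimit S) : Prop :=
  ∀ i, S.EF i (x.1 i) (y.1 i)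

/-- `C̄(A, j) = ∪_{a ∈ A} C̄(a, j)`, where
`C̄(x, j) = ∪ {C(v, j) : (v, x_j) ∈ E(F_j)} = {y ∈ V_G : (y_j, x_j) ∈ E(F_j)}`
(and `C(v, j) = {y ∈ V_G : y_j = v}` is a cylinder). -/
def Cbar (S : TwinnedSeq) (A : Set (TwLimit S)) (j : ℕ) : Set (TwLimit S) :=
  {y | ∃ a ∈ A, S.EF j (y.1 j) (a.1 j)}

/-- The iterated set `C̄(A, j, i)` for `i = j + n`: `C̄(A, j, j) = C̄(A, j)` and
`C̄(A, j, i) = C̄(C̄(A, j, i − 1), i)` for `i > j`. -/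
def CbarIter (S : TwinnedSeq) (A : Set (TwLimit S)) (j : ℕ) : ℕ → Set (TwLimit S)
  | 0 => Cbar S A j
  | n + 1 => Cbar S (CbarIter S A j n) (j + n + 1)

/-- `C̃(x, j) = ∪_{i ≥ j} C̄(x, j, i)`. -/
def Ctilde (S : TwinnedSeq) (x : TwLimit S) (j : ℕ) : Set (TwLimit S) :=
  ⋃ n, CbarIter S {x} j n

/-- `C̃(x, j)` is `E_F`-saturated: if `x' ∈ C̃(x, j)` and `(x', y) ∈ E_F`, then
`y ∈ C̃(x, j)`. -/
theorem Ctilde_saturated (S : TwinnedSeq) (x : TwLimit S) (j : ℕ)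
    (x' : TwLimit S) (hx' : x' ∈ Ctilde S x j) (y : TwLimit S) (hy : limEF S x' y) :
    y ∈ Ctilde S x j := by
  obtain ⟨_, ⟨n, rfl⟩, hn⟩ := hx'
  exact Set.mem_iUnion.2 ⟨n + 1, x', hn, S.ds2_symm _ _ _ (hy (j + n + 1))⟩
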